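/- Let 1 ≤ m ≤ n and let A₁, A₂ ⊆ [m] with A₁ ⊄ A₂ and A₂ ⊄ A₁. Let f : 𝔽₂ⁿ → 𝔽₂ be defined by f(x) = 1 if and only if supp(x) is nonempty and supp(x) ⊆ A₁ or supp(x) ⊆ A₂. Then: wt(c_f(0,0)) = 0; wt(c_f(0,u)) = 2^{n−1} for all u ≠ 0; wt(c_f(1,0)) = 2^{|A₁|} + 2^{|A₂|} − 2^{|A₁∩A₂|} − 1; and for every nonzero u ∈ 𝔽₂ⁿ, wt(c_f(1,u)) = 2^{n−1} − 1 + 2^{|A₁|}χ₁ + 2^{|A₂|}χ₂ − 2^{|A₁∩A₂|}χ₁₂, where χ₁ = 1 iff supp(u) ∩ A₁ = ∅, χ₂ = 1 iff supp(u) ∩ A₂ = ∅, and χ₁₂ = 1 iff supp(u) ∩ (A₁∩A₂) = ∅ (each being 0 otherwise). -/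
import Mathlib


open Finset

/-- The order relation of the hierarchical poset `ℍ(m,n)` on `Fin n`:
`i ⪯ j` iff `i = j`, or `i` lies in the bottom level `[m]` and `j` in the top level. -/
def Hle (n m : ℕ) (i j : Fin n) : Prop :=
  i = j ∨ ((i : ℕ) < m ∧ m ≤ (j : ℕ))

instance (n m : ℕ) : DecidableRel (Hle n m) := fun i j =>
  decidable_of_iff (i = j ∨ ((i : ℕ) < m ∧ m ≤ (j : ℕ))) Iff.rfl

/-- Down-closed subsets of the hierarchical poset `ℍ(m,n)`. -/
def HDownClosed (n m : ℕ) (S : Finset (Fin n)) : Prop :=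
  ∀ i j : Fin n, Hle n m i j → j ∈ S → i ∈ S

instance (n m : ℕ) : DecidablePred (HDownClosed n m) := fun S =>
  decidable_of_iff (∀ i j : Fin n, Hle n m i j → j ∈ S → i ∈ S) Iff.rfl

/-- The bottom level `[m]` of `ℍ(m,n)`, viewed inside `Fin n`. -/
def lowSet (n m : ℕ) : Finset (Fin n) :=
  Finset.univ.filter (fun i => (i : ℕ) < m)

/-- The support of a vector of `𝔽₂ⁿ`, as a subset of `[n]`. -/
def supp {n : ℕ} (x : Fin n → ZMod 2) : Finset (Fin n) :=
  Finset.univ.filter (fun i => x i ≠ 0)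

/-- The standard inner product on `𝔽₂ⁿ`. -/
def ip {n : ℕ} (u x : Fin n → ZMod 2) : ZMod 2 := ∑ i, u i * x i

/-- The Hamming weight of the codeword `c_{D,u} = (u·x)_{x ∈ D}`. -/
def wtD {n : ℕ} (D : Finset (Fin n → ZMod 2)) (u : Fin n → ZMod 2) : ℕ :=
  (D.filter (fun x => ip u x = 1)).card

/-- The Hamming weight of the codeword `c_f(s,u) = (s·f(x) + u·x)_{x ∈ 𝔽₂ⁿ ∖ {0}}`. -/
def wtF {n : ℕ} (f : (Fin n → ZMod 2) → ZMod 2) (s : ZMod 2) (u : Fin n → ZMod 2) : ℕ :=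
  (Finset.univ.filter (fun x : Fin n → ZMod 2 => x ≠ 0 ∧ s * f x + ip u x = 1)).card

/-- The Hamming weight of the first `m` coordinates of `u` (the part `v` of `u = (v,w)`). -/
def wtLow (n m : ℕ) (u : Fin n → ZMod 2) : ℕ :=
  (Finset.univ.filter (fun i : Fin n => (i : ℕ) < m ∧ u i ≠ 0)).card

section aux
variable {n : ℕ}

lemma zmod2_cases : ∀ a : ZMod 2, a ≠ 0 → a = 1 := by decide

lemma mem_supp {x : Fin n → ZMod 2} {i : Fin n} : i ∈ supp x ↔ x i ≠ 0 := by
  simp [supp]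

lemma supp_inj {x y : Fin n → ZMod 2} (h : supp x = supp y) : x = y := by
  funext i
  have h' : x i ≠ 0 ↔ y i ≠ 0 := by
    rw [← mem_supp, ← mem_supp, h]
  exact (by decide : ∀ a b : ZMod 2, (a ≠ 0 ↔ b ≠ 0) → a = b) _ _ h'

lemma supp_zero : supp (0 : Fin n → ZMod 2) = ∅ := by simp [supp]

lemma supp_eq_empty {x : Fin n → ZMod 2} : supp x = ∅ ↔ x = 0 := by
  constructor
  · intro h; exact supp_inj (h.trans supp_zero.symm)
  · rintro rfl; exact supp_zero

lemma ip_zero_right (u : Fin n → ZMod 2) : ip u 0 = 0 := by simp [ip]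

lemma ip_zero_left (x : Fin n → ZMod 2) : ip 0 x = 0 := by simp [ip]

lemma ip_add (u x y : Fin n → ZMod 2) : ip u (x + y) = ip u x + ip u y := by
  simp [ip, mul_add, Finset.sum_add_distrib]

def e1 (i₀ : Fin n) : Fin n → ZMod 2 := fun i => if i = i₀ then 1 else 0

lemma ip_e1 (u : Fin n → ZMod 2) (i₀ : Fin n) : ip u (e1 i₀) = u i₀ := by
  simp [ip, e1, mul_ite]

lemma e1_add_self (i₀ : Fin n) : e1 i₀ + e1 i₀ = 0 := by
  funext i; simp [e1]; split <;> decide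

lemma supp_add_e1 {A : Finset (Fin n)} {x : Fin n → ZMod 2} {i₀ : Fin n}
    (hx : supp x ⊆ A) (hi : i₀ ∈ A) : supp (x + e1 i₀) ⊆ A := by
  intro i hi'
  rw [mem_supp] at hi'
  by_cases h : x i = 0
  · have : e1 i₀ i ≠ 0 := by
      intro h'; apply hi'; simp [Pi.add_apply, h, h']
    simp only [e1] at this
    split at this
    · subst ‹i = i₀›; exact hi
    · exact absurd rfl this
  · exact hx (mem_supp.mpr h)

lemma ip_eq_zero_of_disjoint {A : Finset (Fin n)} {u x : Fin n → ZMod 2}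
    (hd : supp u ∩ A = ∅) (hx : supp x ⊆ A) : ip u x = 0 := by
  apply Finset.sum_eq_zero
  intro i _
  by_cases h : x i = 0
  · simp [h]
  · have hiA : i ∈ A := hx (mem_supp.mpr h)
    have : i ∉ supp u := by
      intro hiu
      exact (Finset.notMem_empty i) (hd ▸ Finset.mem_inter.mpr ⟨hiu, hiA⟩)
    rw [mem_supp, not_not] at this
    simp [this]

lemma card_supp_subset (A : Finset (Fin n)) :
    (univ.filter fun x : Fin n → ZMod 2 => supp x ⊆ A).card = 2 ^ A.card := by
  rw [← Finset.card_powerset]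
  apply Finset.card_bij (fun x _ => supp x)
  · intro x hx
    rw [Finset.mem_powerset]
    exact (Finset.mem_filter.mp hx).2
  · intro x _ y _ h; exact supp_inj h
  · intro S hS
    refine ⟨fun i => if i ∈ S then 1 else 0, ?_, ?_⟩
    · have hs : supp (fun i => if i ∈ S then (1 : ZMod 2) else 0) = S := by
        ext i; by_cases h : i ∈ S <;> simp [mem_supp, h]
      rw [Finset.mem_filter]
      exact ⟨Finset.mem_univ _, by rw [hs]; exact Finset.mem_powerset.mp hS⟩
    · ext i; by_cases h : i ∈ S <;> simp [mem_supp, h]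

lemma card_half {A : Finset (Fin n)} (u : Fin n → ZMod 2) {i₀ : Fin n}
    (hiA : i₀ ∈ A) (hiu : u i₀ ≠ 0) (c : ZMod 2) :
    (univ.filter fun x : Fin n → ZMod 2 => supp x ⊆ A ∧ ip u x = c).card =
    (univ.filter fun x : Fin n → ZMod 2 => supp x ⊆ A ∧ ip u x = c + 1).card := by
  have hu1 : u i₀ = 1 := zmod2_cases _ hiu
  have key : ∀ x : Fin n → ZMod 2, ip u (x + e1 i₀) = ip u x + 1 := fun x => by
    rw [ip_add, ip_e1, hu1]
  have hcan : ∀ x : Fin n → ZMod 2, x + e1 i₀ + e1 i₀ = x := fun x => by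
    rw [add_assoc, e1_add_self, add_zero]
  apply Finset.card_bij' (fun x _ => x + e1 i₀) (fun x _ => x + e1 i₀)
  · intro x hx
    obtain ⟨_, h1, h2⟩ := Finset.mem_filter.mp hx
    exact Finset.mem_filter.mpr ⟨Finset.mem_univ _, supp_add_e1 h1 hiA, by rw [key, h2]⟩
  · intro x hx
    obtain ⟨_, h1, h2⟩ := Finset.mem_filter.mp hx
    refine Finset.mem_filter.mpr ⟨Finset.mem_univ _, supp_add_e1 h1 hiA, ?_⟩
    rw [key, h2, add_assoc]
    have : (1 : ZMod 2) + 1 = 0 := by decide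
    rw [this, add_zero]
  · intro x _; exact hcan x
  · intro x _; exact hcan x

lemma ne_zero_iff_eq_one : ∀ a : ZMod 2, a ≠ 0 ↔ a = 1 := by decide

lemma cardN0and1 (A : Finset (Fin n)) (u : Fin n → ZMod 2) :
    ((univ.filter fun x : Fin n → ZMod 2 => supp x ⊆ A ∧ ip u x = 0).card
      = if supp u ∩ A = ∅ then 2 ^ A.card else 2 ^ (A.card - 1))
    ∧ ((univ.filter fun x : Fin n → ZMod 2 => supp x ⊆ A ∧ ip u x = 1).card
      = if supp u ∩ A = ∅ then 0 else 2 ^ (A.card - 1)) := by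
  split_ifs with hd
  · constructor
    · rw [← card_supp_subset A]
      congr 1
      ext x
      simp only [Finset.mem_filter, and_assoc]
      exact and_congr_right fun _ =>
        and_iff_left_of_imp fun hx => ip_eq_zero_of_disjoint hd hx
    · rw [Finset.card_eq_zero, Finset.filter_eq_empty_iff]
      rintro x - ⟨hx, hip⟩
      rw [ip_eq_zero_of_disjoint hd hx] at hip
      exact absurd hip (by decide)
  · obtain ⟨i₀, hi₀⟩ := Finset.nonempty_iff_ne_empty.mpr hd
    obtain ⟨hiu, hiA⟩ := Finset.mem_inter.mp hi₀
    rw [mem_supp] at hiu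
    have hAc : 1 ≤ A.card := Finset.card_pos.mpr ⟨i₀, hiA⟩
    have h1 := card_half u hiA hiu 0
    rw [zero_add] at h1
    have hsplit := Finset.card_filter_add_card_filter_not
      (s := univ.filter fun x : Fin n → ZMod 2 => supp x ⊆ A) (p := fun x => ip u x = 0)
    have e0 : (univ.filter fun x : Fin n → ZMod 2 => supp x ⊆ A).filter (fun x => ip u x = 0)
        = univ.filter fun x : Fin n → ZMod 2 => supp x ⊆ A ∧ ip u x = 0 := by
      rw [Finset.filter_filter]
    have e1' : (univ.filter fun x : Fin n → ZMod 2 => supp x ⊆ A).filter (fun x => ¬ ip u x = 0)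
        = univ.filter fun x : Fin n → ZMod 2 => supp x ⊆ A ∧ ip u x = 1 := by
      rw [Finset.filter_filter]
      ext x
      simp only [Finset.mem_filter]
      have : ¬ ip u x = 0 ↔ ip u x = 1 := ne_zero_iff_eq_one _
      tauto
    rw [e0, e1', card_supp_subset] at hsplit
    have hpow : 2 ^ A.card = 2 * 2 ^ (A.card - 1) := by
      rw [← pow_succ']
      congr 1
      omega
    constructor <;> omega

lemma cardQ0 (A : Finset (Fin n)) (u : Fin n → ZMod 2) :
    (univ.filter fun x : Fin n → ZMod 2 => supp x ⊆ A ∧ ip u x = 0).card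
      = (univ.filter fun x : Fin n → ZMod 2 => x ≠ 0 ∧ supp x ⊆ A ∧ ip u x = 0).card + 1 := by
  have h : (univ.filter fun x : Fin n → ZMod 2 => supp x ⊆ A ∧ ip u x = 0)
      = insert 0 (univ.filter fun x : Fin n → ZMod 2 => x ≠ 0 ∧ supp x ⊆ A ∧ ip u x = 0) := by
    ext x
    simp only [Finset.mem_insert, Finset.mem_filter, Finset.mem_univ, true_and]
    constructor
    · intro hx
      by_cases h0 : x = 0
      · exact Or.inl h0
      · exact Or.inr ⟨h0, hx⟩
    · rintro (rfl | ⟨-, hx⟩)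
      · exact ⟨by rw [supp_zero]; exact Finset.empty_subset _, ip_zero_right u⟩
      · exact hx
  rw [h, Finset.card_insert_of_notMem]
  simp only [Finset.mem_filter]
  tauto

lemma cardQ1 (A : Finset (Fin n)) (u : Fin n → ZMod 2) :
    (univ.filter fun x : Fin n → ZMod 2 => x ≠ 0 ∧ supp x ⊆ A ∧ ip u x = 1).card
      = (univ.filter fun x : Fin n → ZMod 2 => supp x ⊆ A ∧ ip u x = 1).card := by
  congr 1
  ext x
  simp only [Finset.mem_filter, Finset.mem_univ, true_and]
  constructor
  · tauto
  · intro hx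
    refine ⟨?_, hx⟩
    rintro rfl
    rw [ip_zero_right] at hx
    exact absurd hx.2 (by decide)

/-- Inclusion–exclusion for the union of "supp ⊆ A₁" and "supp ⊆ A₂". -/
lemma cardIE (A₁ A₂ : Finset (Fin n)) (u : Fin n → ZMod 2) (c : ZMod 2) :
    (univ.filter fun x : Fin n → ZMod 2 =>
        x ≠ 0 ∧ (supp x ⊆ A₁ ∨ supp x ⊆ A₂) ∧ ip u x = c).card
      + (univ.filter fun x : Fin n → ZMod 2 =>
        x ≠ 0 ∧ supp x ⊆ A₁ ∩ A₂ ∧ ip u x = c).card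
    = (univ.filter fun x : Fin n → ZMod 2 => x ≠ 0 ∧ supp x ⊆ A₁ ∧ ip u x = c).card
      + (univ.filter fun x : Fin n → ZMod 2 => x ≠ 0 ∧ supp x ⊆ A₂ ∧ ip u x = c).card := by
  have h := Finset.card_union_add_card_inter
    (univ.filter fun x : Fin n → ZMod 2 => x ≠ 0 ∧ supp x ⊆ A₁ ∧ ip u x = c)
    (univ.filter fun x : Fin n → ZMod 2 => x ≠ 0 ∧ supp x ⊆ A₂ ∧ ip u x = c)
  rw [← h]
  congr 2
  · ext x
    simp only [Finset.mem_union, Finset.mem_filter, Finset.mem_univ, true_and]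
    tauto
  · ext x
    simp only [Finset.mem_inter, Finset.mem_filter, Finset.mem_univ, true_and,
      Finset.subset_inter_iff]
    tauto

lemma card_ip_one {u : Fin n → ZMod 2} (hu : u ≠ 0) :
    (univ.filter fun x : Fin n → ZMod 2 => ip u x = 1).card = 2 ^ (n - 1) := by
  have h := (cardN0and1 Finset.univ u).2
  have hne : supp u ∩ Finset.univ ≠ ∅ := by
    rw [Finset.inter_univ]
    intro h'
    exact hu (supp_eq_empty.mp h')
  rw [if_neg hne] at h
  have e : (univ.filter fun x : Fin n → ZMod 2 => supp x ⊆ Finset.univ ∧ ip u x = 1)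
      = univ.filter fun x : Fin n → ZMod 2 => ip u x = 1 := by
    ext x
    simp [Finset.subset_univ]
  rw [e] at h
  rw [h, Finset.card_univ, Fintype.card_fin]

end aux

section auxx2
variable {n : ℕ}

/-- The Q-counts expressed in ℤ, combining the above. -/
lemma q0_val (A : Finset (Fin n)) (u : Fin n → ZMod 2) :
    ((univ.filter fun x : Fin n → ZMod 2 => x ≠ 0 ∧ supp x ⊆ A ∧ ip u x = 0).card : ℤ)
      = (if supp u ∩ A = ∅ then 2 ^ A.card else 2 ^ (A.card - 1)) - 1 := by
  have h1 := cardQ0 A u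
  have h2 := (cardN0and1 A u).1
  rw [h1] at h2
  split_ifs at h2 ⊢ with hd <;>
  · have h3 := congrArg (Nat.cast : ℕ → ℤ) h2
    push_cast at h3
    linarith

lemma q1_val (A : Finset (Fin n)) (u : Fin n → ZMod 2) :
    ((univ.filter fun x : Fin n → ZMod 2 => x ≠ 0 ∧ supp x ⊆ A ∧ ip u x = 1).card : ℤ)
      = if supp u ∩ A = ∅ then 0 else 2 ^ (A.card - 1) := by
  have h1 := cardQ1 A u
  have h2 := (cardN0and1 A u).2
  rw [← h1] at h2
  split_ifs at h2 ⊢ with hd <;> exact_mod_cast h2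

end auxx2

/-- **Theorem 5.7(1).**  Let `A₁, A₂ ⊆ [m]` be incomparable and let `f` be the
indicator of the nonempty subsets of `A₁` or of `A₂`.  Then: `wt(c_f(0,0)) = 0`;
`wt(c_f(0,u)) = 2^{n−1}` for `u ≠ 0`;
`wt(c_f(1,0)) = 2^{|A₁|} + 2^{|A₂|} − 2^{|A₁∩A₂|} − 1`; and for `u ≠ 0`,
`wt(c_f(1,u)) = 2^{n−1} − 1 + 2^{|A₁|}χ₁ + 2^{|A₂|}χ₂ − 2^{|A₁∩A₂|}χ₁₂`. -/
theorem stmt_10 (n m : ℕ) (hm : 1 ≤ m) (hmn : m ≤ n)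
    (A₁ A₂ : Finset (Fin n))
    (hA₁ : ∀ i ∈ A₁, (i : ℕ) < m) (hA₂ : ∀ i ∈ A₂, (i : ℕ) < m)
    (h12 : ¬ A₁ ⊆ A₂) (h21 : ¬ A₂ ⊆ A₁)
    (f : (Fin n → ZMod 2) → ZMod 2)
    (hf : ∀ x, f x = 1 ↔ ((supp x).Nonempty ∧ (supp x ⊆ A₁ ∨ supp x ⊆ A₂))) :
    wtF f 0 0 = 0
    ∧ (∀ u : Fin n → ZMod 2, u ≠ 0 → wtF f 0 u = 2 ^ (n - 1))
    ∧ (wtF f 1 0 : ℤ) = 2 ^ A₁.card + 2 ^ A₂.card - 2 ^ (A₁ ∩ A₂).card - 1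
    ∧ ∀ u : Fin n → ZMod 2, u ≠ 0 →
        (wtF f 1 u : ℤ) =
          2 ^ (n - 1) - 1
          + 2 ^ A₁.card * (if supp u ∩ A₁ = ∅ then 1 else 0)
          + 2 ^ A₂.card * (if supp u ∩ A₂ = ∅ then 1 else 0)
          - 2 ^ (A₁ ∩ A₂).card * (if supp u ∩ (A₁ ∩ A₂) = ∅ then 1 else 0) := by
  have hcases : ∀ a : ZMod 2, a = 0 ∨ a = 1 := by decide
  have hf1 : ∀ x : Fin n → ZMod 2, f x = 1 ↔ (x ≠ 0 ∧ (supp x ⊆ A₁ ∨ supp x ⊆ A₂)) := by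
    intro x
    rw [hf x]
    constructor
    · rintro ⟨h1, h2⟩
      refine ⟨fun h0 => ?_, h2⟩
      subst h0
      rw [supp_zero] at h1
      exact Finset.not_nonempty_empty h1
    · rintro ⟨h0, h2⟩
      exact ⟨Finset.nonempty_iff_ne_empty.mpr (fun h => h0 (supp_eq_empty.mp h)), h2⟩
  refine ⟨?_, ?_, ?_, ?_⟩
  · -- part 1
    rw [wtF, Finset.card_eq_zero, Finset.filter_eq_empty_iff]
    rintro x - ⟨-, hx⟩
    rw [zero_mul, zero_add, ip_zero_left] at hx
    exact absurd hx (by decide)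
  · -- part 2
    intro u hu
    rw [wtF, ← card_ip_one hu]
    congr 1
    ext x
    simp only [Finset.mem_filter, Finset.mem_univ, true_and, zero_mul, zero_add]
    constructor
    · tauto
    · intro hx
      refine ⟨?_, hx⟩
      rintro rfl
      rw [ip_zero_right] at hx
      exact absurd hx (by decide)
  · -- part 3
    have e3 : (univ.filter fun x : Fin n → ZMod 2 => x ≠ 0 ∧ 1 * f x + ip 0 x = 1)
        = univ.filter fun x : Fin n → ZMod 2 =>
            x ≠ 0 ∧ (supp x ⊆ A₁ ∨ supp x ⊆ A₂) ∧ ip (0 : Fin n → ZMod 2) x = 0 := by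
      ext x
      simp only [Finset.mem_filter, Finset.mem_univ, true_and, one_mul, ip_zero_left,
        add_zero, hf1 x]
      tauto
    have hIE := cardIE A₁ A₂ (0 : Fin n → ZMod 2) 0
    have hq1 := q0_val A₁ (0 : Fin n → ZMod 2)
    have hq2 := q0_val A₂ (0 : Fin n → ZMod 2)
    have hq12 := q0_val (A₁ ∩ A₂) (0 : Fin n → ZMod 2)
    have hd : ∀ A : Finset (Fin n), supp (0 : Fin n → ZMod 2) ∩ A = ∅ := by
      intro A
      rw [supp_zero, Finset.empty_inter]
    rw [if_pos (hd A₁)] at hq1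
    rw [if_pos (hd A₂)] at hq2
    rw [if_pos (hd (A₁ ∩ A₂))] at hq12
    rw [wtF, e3]
    have hIEZ : ((univ.filter fun x : Fin n → ZMod 2 =>
        x ≠ 0 ∧ (supp x ⊆ A₁ ∨ supp x ⊆ A₂) ∧ ip (0 : Fin n → ZMod 2) x = 0).card : ℤ)
      + ((univ.filter fun x : Fin n → ZMod 2 =>
        x ≠ 0 ∧ supp x ⊆ A₁ ∩ A₂ ∧ ip (0 : Fin n → ZMod 2) x = 0).card : ℤ)
      = ((univ.filter fun x : Fin n → ZMod 2 =>
          x ≠ 0 ∧ supp x ⊆ A₁ ∧ ip (0 : Fin n → ZMod 2) x = 0).card : ℤ)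
      + ((univ.filter fun x : Fin n → ZMod 2 =>
          x ≠ 0 ∧ supp x ⊆ A₂ ∧ ip (0 : Fin n → ZMod 2) x = 0).card : ℤ) := by
      exact_mod_cast hIE
    rw [hq1, hq2, hq12] at hIEZ
    linarith
  · -- part 4
    intro u hu
    -- split the main filter
    have hsplit : (univ.filter fun x : Fin n → ZMod 2 => x ≠ 0 ∧ 1 * f x + ip u x = 1)
        = (univ.filter fun x : Fin n → ZMod 2 =>
              x ≠ 0 ∧ (supp x ⊆ A₁ ∨ supp x ⊆ A₂) ∧ ip u x = 0)
          ∪ (univ.filter fun x : Fin n → ZMod 2 => x ≠ 0 ∧ f x = 0 ∧ ip u x = 1) := by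
      ext x
      simp only [Finset.mem_union, Finset.mem_filter, Finset.mem_univ, true_and, one_mul]
      constructor
      · rintro ⟨hx0, hsum⟩
        rcases hcases (f x) with h | h
        · right
          exact ⟨hx0, h, by rwa [h, zero_add] at hsum⟩
        · left
          obtain ⟨-, hsub⟩ := (hf1 x).mp h
          refine ⟨hx0, hsub, ?_⟩
          rw [h] at hsum
          rcases hcases (ip u x) with h' | h'
          · exact h'
          · rw [h'] at hsum
            exact absurd hsum (by decide)
      · rintro (⟨hx0, hsub, h0⟩ | ⟨hx0, h0, h1⟩)
        · refine ⟨hx0, ?_⟩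
          rw [(hf1 x).mpr ⟨hx0, hsub⟩, h0, add_zero]
        · exact ⟨hx0, by rw [h0, h1, zero_add]⟩
    have hdisj : Disjoint
        (univ.filter fun x : Fin n → ZMod 2 =>
            x ≠ 0 ∧ (supp x ⊆ A₁ ∨ supp x ⊆ A₂) ∧ ip u x = 0)
        (univ.filter fun x : Fin n → ZMod 2 => x ≠ 0 ∧ f x = 0 ∧ ip u x = 1) := by
      rw [Finset.disjoint_left]
      rintro x hx hx'
      obtain ⟨-, -, h0⟩ := (Finset.mem_filter.mp hx).2
      obtain ⟨-, -, h1⟩ := (Finset.mem_filter.mp hx').2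
      rw [h0] at h1
      exact absurd h1 (by decide)
    -- second piece via complement count
    have hcomp := Finset.card_filter_add_card_filter_not
      (s := univ.filter fun x : Fin n → ZMod 2 => ip u x = 1) (p := fun x => f x = 1)
    have ec1 : (univ.filter fun x : Fin n → ZMod 2 => ip u x = 1).filter (fun x => f x = 1)
        = univ.filter fun x : Fin n → ZMod 2 =>
            x ≠ 0 ∧ (supp x ⊆ A₁ ∨ supp x ⊆ A₂) ∧ ip u x = 1 := by
      rw [Finset.filter_filter]
      ext x
      simp only [Finset.mem_filter, Finset.mem_univ, true_and, hf1 x]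
      tauto
    have ec2 : (univ.filter fun x : Fin n → ZMod 2 => ip u x = 1).filter (fun x => ¬ f x = 1)
        = univ.filter fun x : Fin n → ZMod 2 => x ≠ 0 ∧ f x = 0 ∧ ip u x = 1 := by
      rw [Finset.filter_filter]
      ext x
      simp only [Finset.mem_filter, Finset.mem_univ, true_and]
      constructor
      · rintro ⟨hip, hnf⟩
        have hx0 : x ≠ 0 := by
          rintro rfl
          rw [ip_zero_right] at hip
          exact absurd hip (by decide)
        rcases hcases (f x) with h | h
        · exact ⟨hx0, h, hip⟩
        · exact absurd h hnf
      · rintro ⟨hx0, h0, hip⟩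
        exact ⟨hip, by rw [h0]; decide⟩
    rw [ec1, ec2, card_ip_one hu] at hcomp
    -- inclusion–exclusion for both c = 0 and c = 1
    have hIE0 := cardIE A₁ A₂ u 0
    have hIE1 := cardIE A₁ A₂ u 1
    -- assemble
    rw [wtF, hsplit, Finset.card_union_of_disjoint hdisj]
    have hq10 := q0_val A₁ u
    have hq20 := q0_val A₂ u
    have hq120 := q0_val (A₁ ∩ A₂) u
    have hq11 := q1_val A₁ u
    have hq21 := q1_val A₂ u
    have hq121 := q1_val (A₁ ∩ A₂) u
    push_cast
    have hIE0Z : (_ : ℤ) = _ := congrArg (Nat.cast : ℕ → ℤ) hIE0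
    have hIE1Z : (_ : ℤ) = _ := congrArg (Nat.cast : ℕ → ℤ) hIE1
    push_cast at hIE0Z hIE1Z
    have hcompZ : (_ : ℤ) = _ := congrArg (Nat.cast : ℕ → ℤ) hcomp
    push_cast at hcompZ
    rw [hq10, hq20, hq120] at hIE0Z
    rw [hq11, hq21, hq121] at hIE1Z
    split_ifs at hIE0Z hIE1Z ⊢ <;> linarith
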